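/- arXiv:1906.06607 — 8 statements merged into one kernel-verified Lean document; each statement's English description precedes it below -/
import Mathlib

section
/- Let a, b, 1 be positive reals with a γ₁ + b γ₂ + 1 = 0 for complex γ₁, γ₂ with |γ₁| < 1 and |γ₂| < 1, and suppose a, b, 1 satisfy the triangle inequalities (a + b > 1, a + 1 > b, b + 1 > a). Then |a γ₂ + b γ₁ + γ₁ γ₂| < a(1 - |γ₁|²) + b(1 - |γ₂|²). -/
open ComplexConjugate

theorem norm_smul_add_smul_lt {E : Type*} [SeminormedAddCommGroup E] [NormedSpace ℝ E]
    {s t : ℝ} {x y : E} (hs : 0 < s) (ht : 0 ≤ t) (hx : ‖x‖ < 1) (hy : ‖y‖ < 1) :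
    ‖s • x + t • y‖ < s + t :=
  calc ‖s • x + t • y‖ ≤ s * ‖x‖ + t * ‖y‖ := by
        simpa only [norm_smul, Real.norm_of_nonneg hs.le, Real.norm_of_nonneg ht]
          using norm_add_le (s • x) (t • y)
    _ < s + t := add_lt_add_of_lt_of_le (mul_lt_of_lt_one_right hs hx)
        (mul_le_of_le_one_right ht hy.le)

/-- Multiplying the conjugate relation `a γ̄₁ + b γ̄₂ = -1` by `γ₁ γ₂` turns `γ₁ γ₂` into
`-(a |γ₁|² γ₂ + b |γ₂|² γ₁)`. -/
theorem add_mul_eq_smul_add_smul_of_linear_relation {a b : ℝ} {γ₁ γ₂ : ℂ}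
    (hlin : (a : ℂ) * γ₁ + (b : ℂ) * γ₂ + 1 = 0) :
    (a : ℂ) * γ₂ + (b : ℂ) * γ₁ + γ₁ * γ₂
      = (a * (1 - ‖γ₁‖ ^ 2)) • γ₂ + (b * (1 - ‖γ₂‖ ^ 2)) • γ₁ := by
  have hconj : (a : ℂ) * conj γ₁ + (b : ℂ) * conj γ₂ + 1 = 0 := by
    simpa using congrArg conj hlin
  simp only [Complex.real_smul, Complex.ofReal_mul, Complex.ofReal_sub, Complex.ofReal_one,
    Complex.ofReal_pow, ← Complex.mul_conj']
  linear_combination γ₁ * γ₂ * hconj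

theorem stmt_0_general (a b : ℝ) (γ₁ γ₂ : ℂ) (ha : 0 < a) (hb : 0 < b)
    (hγ₁ : ‖γ₁‖ < 1) (hγ₂ : ‖γ₂‖ < 1)
    (hlin : (a : ℂ) * γ₁ + (b : ℂ) * γ₂ + 1 = 0) :
    ‖(a : ℂ) * γ₂ + (b : ℂ) * γ₁ + γ₁ * γ₂‖
      < a * (1 - ‖γ₁‖ ^ 2) + b * (1 - ‖γ₂‖ ^ 2) := by
  have h₁ : 0 < 1 - ‖γ₁‖ ^ 2 := sub_pos.2 (pow_lt_one₀ (norm_nonneg _) hγ₁ two_ne_zero)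
  have h₂ : 0 < 1 - ‖γ₂‖ ^ 2 := sub_pos.2 (pow_lt_one₀ (norm_nonneg _) hγ₂ two_ne_zero)
  rw [add_mul_eq_smul_add_smul_of_linear_relation hlin]
  exact norm_smul_add_smul_lt (mul_pos ha h₁) (mul_pos hb h₂).le hγ₂ hγ₁

theorem stmt_0 (a b : ℝ) (γ₁ γ₂ : ℂ) (ha : 0 < a) (hb : 0 < b)
    (ht1 : a + b > 1) (ht2 : a + 1 > b) (ht3 : b + 1 > a)
    (hγ₁ : ‖γ₁‖ < 1) (hγ₂ : ‖γ₂‖ < 1)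
    (hlin : (a : ℂ) * γ₁ + (b : ℂ) * γ₂ + 1 = 0) :
    ‖(a : ℂ) * γ₂ + (b : ℂ) * γ₁ + γ₁ * γ₂‖
      < a * (1 - ‖γ₁‖ ^ 2) + b * (1 - ‖γ₂‖ ^ 2) :=
  stmt_0_general a b γ₁ γ₂ ha hb hγ₁ hγ₂ hlin
end

section
/- Let a, b be positive reals with a + b > 1, a + 1 > b, b + 1 > a, and let γ₁, γ₂ be complex numbers with |γ₁| < 1, |γ₂| < 1 and a γ₁ + b γ₂ + 1 = 0. Then |a(1 - |γ₁|²) - b(1 - |γ₂|²)| < |a γ₂ + b γ₁ + γ₁ γ₂|. -/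
/-! Eliminating `γ₂ = -(a γ₁ + 1) / b` gives the identity
`a b (|W|² - (A - B)²) = A B (1 - (a - b)²)`, where `W = a γ₂ + b γ₁ + γ₁ γ₂`,
`A = a (1 - |γ₁|²)` and `B = b (1 - |γ₂|²)`. Inside the unit disc `A, B > 0`, and
`|a - b| < 1` makes the last factor positive, so `(A - B)² < |W|²`. -/

open Complex

theorem mul_mul_sq_norm_sub_sq_eq (a b : ℝ) {x y : ℂ} (h : a * x + b * y + 1 = 0) :
    a * b * (‖a * y + b * x + x * y‖ ^ 2 - (a * (1 - ‖x‖ ^ 2) - b * (1 - ‖y‖ ^ 2)) ^ 2) =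
      a * (1 - ‖x‖ ^ 2) * (b * (1 - ‖y‖ ^ 2)) * (1 - (a - b) ^ 2) := by
  rcases eq_or_ne b 0 with rfl | hb
  · simp
  have hy : y = -(a * x + 1) / b := by
    field_simp [ofReal_ne_zero.2 hb]
    linear_combination h
  subst hy
  simp only [Complex.sq_norm, normSq_apply, add_re, add_im, mul_re, mul_im, div_re, div_im, neg_re,
    neg_im, ofReal_re, ofReal_im, one_re, one_im]
  field_simp
  ring

theorem abs_sub_lt_norm_of_add_eq_neg_one {a b : ℝ} {x y : ℂ} (ha : 0 < a) (hb : 0 < b)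
    (hab : |a - b| < 1) (hx : ‖x‖ < 1) (hy : ‖y‖ < 1) (h : a * x + b * y + 1 = 0) :
    |a * (1 - ‖x‖ ^ 2) - b * (1 - ‖y‖ ^ 2)| < ‖a * y + b * x + x * y‖ := by
  have hA : 0 < a * (1 - ‖x‖ ^ 2) :=
    mul_pos ha (sub_pos.2 (pow_lt_one₀ (norm_nonneg x) hx two_ne_zero))
  have hB : 0 < b * (1 - ‖y‖ ^ 2) :=
    mul_pos hb (sub_pos.2 (pow_lt_one₀ (norm_nonneg y) hy two_ne_zero))
  have hC : 0 < 1 - (a - b) ^ 2 := sub_pos.2 (by simpa using (sq_lt_one_iff_abs_lt_one _).2 hab)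
  have hpos := mul_mul_sq_norm_sub_sq_eq a b h ▸ mul_pos (mul_pos hA hB) hC
  exact abs_lt_of_sq_lt_sq (sub_pos.1 (pos_of_mul_pos_right hpos (mul_pos ha hb).le))
    (norm_nonneg _)

theorem stmt_1_general (a b : ℝ) (γ₁ γ₂ : ℂ) (ha : 0 < a) (hb : 0 < b)
    (ht2 : a + 1 > b) (ht3 : b + 1 > a)
    (hγ₁ : ‖γ₁‖ < 1) (hγ₂ : ‖γ₂‖ < 1)
    (hlin : (a : ℂ) * γ₁ + (b : ℂ) * γ₂ + 1 = 0) :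
    |a * (1 - ‖γ₁‖ ^ 2) - b * (1 - ‖γ₂‖ ^ 2)|
      < ‖(a : ℂ) * γ₂ + (b : ℂ) * γ₁ + γ₁ * γ₂‖ :=
  abs_sub_lt_norm_of_add_eq_neg_one ha hb (abs_sub_lt_iff.2 ⟨by linarith, by linarith⟩) hγ₁ hγ₂
    hlin

theorem stmt_1 (a b : ℝ) (γ₁ γ₂ : ℂ) (ha : 0 < a) (hb : 0 < b)
    (ht1 : a + b > 1) (ht2 : a + 1 > b) (ht3 : b + 1 > a)
    (hγ₁ : ‖γ₁‖ < 1) (hγ₂ : ‖γ₂‖ < 1)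
    (hlin : (a : ℂ) * γ₁ + (b : ℂ) * γ₂ + 1 = 0) :
    |a * (1 - ‖γ₁‖ ^ 2) - b * (1 - ‖γ₂‖ ^ 2)|
      < ‖(a : ℂ) * γ₂ + (b : ℂ) * γ₁ + γ₁ * γ₂‖ :=
  stmt_1_general a b γ₁ γ₂ ha hb ht2 ht3 hγ₁ hγ₂ hlin
end

section
/- Let a, b > 0 satisfy the triangle inequality with 1, and let γ₁, γ₂ ∈ 𝔻 satisfy a γ₁ + b γ₂ + 1 = 0. Then there exist exactly two pairs (ω, η) of unimodular complex numbers satisfying a ω (1 - |γ₁|²) + b η (1 - |γ₂|²) + a γ₂ + b γ₁ + γ₁ γ₂ = 0. -/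
/-!
With `A = a (1 - ‖γ₁‖²)`, `B = b (1 - ‖γ₂‖²)` and `C = -(a γ₂ + b γ₁ + γ₁ γ₂)` the equation reads
`A ω + B η = C`. Its unimodular solutions correspond to the intersection points of the unit circle
with the circle `‖C - A ω‖ = B`, and there are exactly two of them when `|A - B| < ‖C‖ < A + B`.
Using `a γ₁ + b γ₂ = -1` one finds
`(A + B)² - ‖C‖² = (1 - ‖γ₁‖²)(1 - ‖γ₂‖²)((a + b)² - 1)` and
`‖C‖² - (A - B)² = (1 - ‖γ₁‖²)(1 - ‖γ₂‖²)(1 - (a - b)²)`,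
so these strict inequalities are the triangle inequalities for `a`, `b`, `1`.
-/

open ComplexConjugate

theorem ncard_setOf_norm_eq_one_re_eq {t : ℝ} (ht : t ^ 2 < 1) :
    {ζ : ℂ | ‖ζ‖ = 1 ∧ ζ.re = t}.ncard = 2 := by
  set s := √(1 - t ^ 2)
  have hs_sq : s ^ 2 = 1 - t ^ 2 := Real.sq_sqrt (by linarith)
  have hs : 0 < s := Real.sqrt_pos.2 (by linarith)
  have hS : {ζ : ℂ | ‖ζ‖ = 1 ∧ ζ.re = t} = {⟨t, s⟩, ⟨t, -s⟩} := by
    ext ⟨x, y⟩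
    simp only [Set.mem_ofPred_eq, Set.mem_insert_iff, Set.mem_singleton_iff, Complex.mk.injEq,
      ← pow_eq_one_iff_of_nonneg (norm_nonneg _) two_ne_zero, Complex.sq_norm,
      Complex.normSq_mk]
    constructor
    · rintro ⟨hxy, rfl⟩
      have : y ^ 2 = s ^ 2 := by linear_combination hxy - hs_sq
      simpa using sq_eq_sq_iff_eq_or_eq_neg.1 this
    · rintro (⟨rfl, rfl⟩ | ⟨rfl, rfl⟩) <;> exact ⟨by linear_combination hs_sq, rfl⟩
  rw [hS, Set.ncard_pair]
  simp only [ne_eq, Complex.mk.injEq, true_and]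
  linarith

theorem norm_ofReal_sub_mul_eq_iff {r A B : ℝ} (hr : 0 < r) (hA : 0 < A) (hB : 0 ≤ B)
    {ζ : ℂ} (hζ : ‖ζ‖ = 1) :
    ‖(r : ℂ) - A * ζ‖ = B ↔ ζ.re = (r ^ 2 + A ^ 2 - B ^ 2) / (2 * A * r) := by
  have hexp : ‖(r : ℂ) - A * ζ‖ ^ 2 = r ^ 2 + A ^ 2 - 2 * A * r * ζ.re := by
    have : Complex.normSq ζ = 1 := by rw [← Complex.sq_norm, hζ, one_pow]
    simp only [Complex.sq_norm, Complex.normSq_sub, Complex.normSq_ofReal, this, map_mul,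
      Complex.conj_ofReal, Complex.mul_re, Complex.ofReal_re, Complex.ofReal_im, Complex.conj_re]
    ring
  rw [← sq_eq_sq₀ (norm_nonneg _) hB, hexp, eq_div_iff (by positivity)]
  constructor <;> intro h <;> linarith

theorem ncard_unit_solutions_mul_add_mul_eq {A B : ℝ} {C : ℂ} (hA : 0 < A) (hB : 0 < B)
    (hlow : |A - B| < ‖C‖) (hup : ‖C‖ < A + B) :
    {p : ℂ × ℂ | ‖p.1‖ = 1 ∧ ‖p.2‖ = 1 ∧ (A : ℂ) * p.1 + B * p.2 = C}.ncard = 2 := by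
  set r := ‖C‖
  have hr : 0 < r := (abs_nonneg _).trans_lt hlow
  set u := C / r
  have hu : ‖u‖ = 1 := by simp [u, r, hr.ne']
  have hu0 : u ≠ 0 := norm_ne_zero_iff.1 (by rw [hu]; exact one_ne_zero)
  have hC : C = r * u := by simp [u, mul_div_cancel₀, hr.ne']
  have hBC : (B : ℂ) ≠ 0 := by exact_mod_cast hB.ne'
  set t := (r ^ 2 + A ^ 2 - B ^ 2) / (2 * A * r)
  have ht : t ^ 2 < 1 := by
    obtain ⟨h₁, h₂⟩ := abs_lt.1 hlow
    rw [div_pow, div_lt_one (by positivity)]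
    have hfac : (2 * A * r) ^ 2 - (r ^ 2 + A ^ 2 - B ^ 2) ^ 2 =
        (A + B - r) * (B + r - A) * (r + A - B) * (r + A + B) := by ring
    have : 0 < (A + B - r) * (B + r - A) * (r + A - B) * (r + A + B) := by
      apply_rules [mul_pos] <;> linarith
    linarith
  let sol (ζ : ℂ) : ℂ × ℂ := (u * ζ, (C - A * (u * ζ)) / B)
  have hsol : Function.Injective sol := fun ζ₁ ζ₂ h => mul_left_cancel₀ hu0 (congrArg Prod.fst h)
  suffices {p : ℂ × ℂ | ‖p.1‖ = 1 ∧ ‖p.2‖ = 1 ∧ (A : ℂ) * p.1 + B * p.2 = C} =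
      sol '' {ζ : ℂ | ‖ζ‖ = 1 ∧ ζ.re = t} by
    rw [this, Set.ncard_image_of_injective _ hsol, ncard_setOf_norm_eq_one_re_eq ht]
  -- writing `ω = u ζ` turns the circle `‖C - A ω‖ = B` into the vertical line `ζ.re = t`
  have hrot (ζ : ℂ) : C - A * (u * ζ) = u * (r - A * ζ) := by rw [hC]; ring
  ext ⟨ω, η⟩
  simp only [Set.mem_ofPred_eq, Set.mem_image]
  constructor
  · rintro ⟨hω, hη, heq⟩
    have huu : u * (conj u * ω) = ω := by
      rw [← mul_assoc, Complex.mul_conj', hu]; push_cast; ring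
    have hζ : ‖conj u * ω‖ = 1 := by rw [norm_mul, Complex.norm_conj, hu, hω, one_mul]
    have hB' : ‖(r : ℂ) - A * (conj u * ω)‖ = B := by
      rw [← one_mul ‖_‖, ← hu, ← norm_mul, ← hrot, huu, ← heq, add_sub_cancel_left, norm_mul,
        hη, mul_one, Complex.norm_real, Real.norm_of_nonneg hB.le]
    refine ⟨conj u * ω, ⟨hζ, (norm_ofReal_sub_mul_eq_iff hr hA hB.le hζ).1 hB'⟩, ?_⟩
    simp only [sol, huu, Prod.mk.injEq, true_and]
    field_simp
    linear_combination -heq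
  · rintro ⟨ζ, ⟨hζ, hre⟩, hp⟩
    simp only [sol, Prod.mk.injEq] at hp
    obtain ⟨rfl, rfl⟩ := hp
    refine ⟨by rw [norm_mul, hu, hζ, one_mul], ?_, by field_simp; ring⟩
    rw [norm_div, hrot, norm_mul, hu, one_mul, (norm_ofReal_sub_mul_eq_iff hr hA hB.le hζ).2 hre]
    simp [abs_of_pos hB, hB.ne']

theorem norm_sq_mul_add_mul_add_mul {a b : ℝ} {u v : ℂ} (h : (a : ℂ) * u + b * v + 1 = 0) :
    ‖(a : ℂ) * v + b * u + u * v‖ ^ 2 =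
      (a * (1 - ‖u‖ ^ 2) + b * (1 - ‖v‖ ^ 2)) ^ 2 -
        (1 - ‖u‖ ^ 2) * (1 - ‖v‖ ^ 2) * ((a + b) ^ 2 - 1) := by
  have h' : (a : ℂ) * conj u + b * conj v + 1 = 0 := by simpa using congrArg conj h
  -- with `conj u`, `conj v` as independent variables the identity lies in the ideal of `h`, `h'`
  apply Complex.ofReal_injective
  push_cast
  simp only [← Complex.mul_conj', map_add, map_mul, Complex.conj_ofReal]
  linear_combination
    (-((u * conj u - v * conj v) * a * conj u - v * conj v - a * conj u - b * conj v)) * h +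
    ((u * conj u - v * conj v) * (1 + b * v) + v * conj v - 1) * h'

theorem abs_sub_lt_norm_and_norm_lt_add {a b : ℝ} {u v : ℂ} (ha : 0 < a) (hb : 0 < b)
    (h₁ : 1 < a + b) (h₂ : b < a + 1) (h₃ : a < b + 1) (hu : ‖u‖ < 1) (hv : ‖v‖ < 1)
    (h : (a : ℂ) * u + b * v + 1 = 0) :
    |a * (1 - ‖u‖ ^ 2) - b * (1 - ‖v‖ ^ 2)| < ‖(a : ℂ) * v + b * u + u * v‖ ∧
      ‖(a : ℂ) * v + b * u + u * v‖ < a * (1 - ‖u‖ ^ 2) + b * (1 - ‖v‖ ^ 2) := by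
  have hu' : 0 < 1 - ‖u‖ ^ 2 := sub_pos.2 (pow_lt_one₀ (norm_nonneg u) hu two_ne_zero)
  have hv' : 0 < 1 - ‖v‖ ^ 2 := sub_pos.2 (pow_lt_one₀ (norm_nonneg v) hv two_ne_zero)
  have hpos := mul_pos hu' hv'
  have hid := norm_sq_mul_add_mul_add_mul h
  constructor
  · refine abs_lt_of_sq_lt_sq ?_ (norm_nonneg _)
    have : 0 < (1 + a - b) * (1 - a + b) := mul_pos (by linarith) (by linarith)
    linarith [mul_pos hpos this]
  · refine lt_of_pow_lt_pow_left₀ 2 (by positivity) ?_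
    have : 0 < (a + b - 1) * (a + b + 1) := mul_pos (by linarith) (by linarith)
    linarith [mul_pos hpos this]

theorem stmt_7 (a b : ℝ) (γ₁ γ₂ : ℂ) (ha : 0 < a) (hb : 0 < b)
    (ht1 : a + b > 1) (ht2 : a + 1 > b) (ht3 : b + 1 > a)
    (hγ₁ : ‖γ₁‖ < 1) (hγ₂ : ‖γ₂‖ < 1)
    (hlin : (a : ℂ) * γ₁ + (b : ℂ) * γ₂ + 1 = 0) :
    ∃ p₁ p₂ : ℂ × ℂ, p₁ ≠ p₂ ∧
      ∀ p : ℂ × ℂ,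
        (‖p.1‖ = 1 ∧ ‖p.2‖ = 1 ∧
          (a : ℂ) * p.1 * ((1 - ‖γ₁‖ ^ 2 : ℝ) : ℂ) +
            (b : ℂ) * p.2 * ((1 - ‖γ₂‖ ^ 2 : ℝ) : ℂ) +
            (a : ℂ) * γ₂ + (b : ℂ) * γ₁ + γ₁ * γ₂ = 0)
        ↔ (p = p₁ ∨ p = p₂) := by
  have hA : 0 < a * (1 - ‖γ₁‖ ^ 2) :=
    mul_pos ha (sub_pos.2 (pow_lt_one₀ (norm_nonneg _) hγ₁ two_ne_zero))
  have hB : 0 < b * (1 - ‖γ₂‖ ^ 2) :=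
    mul_pos hb (sub_pos.2 (pow_lt_one₀ (norm_nonneg _) hγ₂ two_ne_zero))
  obtain ⟨hlow, hup⟩ := abs_sub_lt_norm_and_norm_lt_add ha hb ht1 ht2 ht3 hγ₁ hγ₂ hlin
  obtain ⟨p₁, p₂, hne, hS⟩ := Set.ncard_eq_two.1 (ncard_unit_solutions_mul_add_mul_eq hA hB
    (hlow.trans_eq (norm_neg _).symm) ((norm_neg _).trans_lt hup))
  refine ⟨p₁, p₂, hne, fun p => ?_⟩
  have hp := Set.ext_iff.1 hS p
  simp only [Set.mem_ofPred_eq, Set.mem_insert_iff, Set.mem_singleton_iff] at hp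
  rw [← hp]
  push_cast
  constructor <;> rintro ⟨h₁, h₂, h⟩ <;> refine ⟨h₁, h₂, by linear_combination h⟩
end

section
/- Let a, b > 0, γ₁, γ₂ ∈ 𝔻 with a γ₁ + b γ₂ + 1 = 0, and let ω, η be unimodular complex numbers with a ω (1 - |γ₁|²) + b η (1 - |γ₂|²) + a γ₂ + b γ₁ + γ₁ γ₂ = 0. Then for every λ ∈ 𝔻 the identity a λ (γ₁ - ωλ)/(1 - ω conj(γ₁) λ) + b λ (γ₂ - ηλ)/(1 - η conj(γ₂) λ) + λ = a λ² (γ₂ - ηλ)/(1 - η conj(γ₂) λ) + b λ² (γ₁ - ωλ)/(1 - ω conj(γ₁) λ) + λ² (γ₁ - ωλ)(γ₂ - ηλ)/((1 - ω conj(γ₁) λ)(1 - η conj(γ₂) λ)) holds. -/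
/-!
Clearing the two denominators (nonzero because `‖ω * conj γ * ζ‖ < 1`) and dividing by `ζ`
turns the identity into the vanishing of a cubic in `ζ`. Its constant coefficient is
`a γ₁ + b γ₂ + 1`, and its linear coefficient is a combination of this and the second
hypothesis. Because `a, b` are real and `|ω| = |η| = 1`, the cubic is self-inversive: its
coefficients of `ζ³` and `ζ²` are `-ωη` times the conjugates of those of `ζ⁰` and `ζ¹`, so the
conjugated hypotheses make them vanish too.
-/

open ComplexConjugate

lemma one_sub_mul_conj_mul_ne_zero {u γ ζ : ℂ} (hu : ‖u‖ = 1) (hγ : ‖γ‖ < 1) (hζ : ‖ζ‖ < 1) :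
    1 - u * conj γ * ζ ≠ 0 := by
  have hlt : ‖u * conj γ * ζ‖ < 1 := by
    rw [norm_mul, norm_mul, hu, one_mul, Complex.norm_conj]
    exact mul_lt_one_of_nonneg_of_lt_one_left (norm_nonneg _) hγ hζ.le
  intro h
  rw [← sub_eq_zero.mp h, norm_one] at hlt
  exact hlt.false

lemma Complex.mul_conj_eq_one_of_norm_eq_one {u : ℂ} (hu : ‖u‖ = 1) : u * conj u = 1 := by
  rw [Complex.mul_conj', hu, Complex.ofReal_one, one_pow]

lemma mobius_variety_eq_cleared (a b : ℝ) (γ₁ γ₂ ω η ζ : ℂ)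
    (hlin : (a : ℂ) * γ₁ + (b : ℂ) * γ₂ + 1 = 0) (hω : ‖ω‖ = 1) (hη : ‖η‖ = 1)
    (hcond : (a : ℂ) * ω * ((1 - ‖γ₁‖ ^ 2 : ℝ) : ℂ) + (b : ℂ) * η * ((1 - ‖γ₂‖ ^ 2 : ℝ) : ℂ) +
      (a : ℂ) * γ₂ + (b : ℂ) * γ₁ + γ₁ * γ₂ = 0) :
    (a : ℂ) * (γ₁ - ω * ζ) * (1 - η * conj γ₂ * ζ) +
        (b : ℂ) * (γ₂ - η * ζ) * (1 - ω * conj γ₁ * ζ) +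
        (1 - ω * conj γ₁ * ζ) * (1 - η * conj γ₂ * ζ) =
      ζ * ((a : ℂ) * (γ₂ - η * ζ) * (1 - ω * conj γ₁ * ζ) +
        (b : ℂ) * (γ₁ - ω * ζ) * (1 - η * conj γ₂ * ζ) + (γ₁ - ω * ζ) * (γ₂ - η * ζ)) := by
  simp only [Complex.ofReal_sub, Complex.ofReal_one, Complex.sq_norm, ← Complex.mul_conj]
    at hcond
  have hlin' : (a : ℂ) * conj γ₁ + (b : ℂ) * conj γ₂ + 1 = 0 := by
    simpa using congrArg conj hlin
  have hcond' : (a : ℂ) * conj ω * (1 - conj γ₁ * γ₁) + (b : ℂ) * conj η * (1 - conj γ₂ * γ₂) +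
      (a : ℂ) * conj γ₂ + (b : ℂ) * conj γ₁ + conj γ₁ * conj γ₂ = 0 := by
    simpa using congrArg conj hcond
  linear_combination hlin + ζ * (-hcond - (ω * conj γ₁ + η * conj γ₂) * hlin)
    + ζ ^ 2 * (ω * η * hcond' + (γ₁ * η + γ₂ * ω) * hlin'
      - (a : ℂ) * η * (1 - γ₁ * conj γ₁) * Complex.mul_conj_eq_one_of_norm_eq_one hω
      - (b : ℂ) * ω * (1 - γ₂ * conj γ₂) * Complex.mul_conj_eq_one_of_norm_eq_one hη)
    - ζ ^ 3 * ω * η * hlin'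

theorem stmt_8_general (a b : ℝ) (γ₁ γ₂ ω η : ℂ)
    (hγ₁ : ‖γ₁‖ < 1) (hγ₂ : ‖γ₂‖ < 1)
    (hlin : (a : ℂ) * γ₁ + (b : ℂ) * γ₂ + 1 = 0)
    (hω : ‖ω‖ = 1) (hη : ‖η‖ = 1)
    (hcond : (a : ℂ) * ω * ((1 - ‖γ₁‖ ^ 2 : ℝ) : ℂ) +
      (b : ℂ) * η * ((1 - ‖γ₂‖ ^ 2 : ℝ) : ℂ) +
      (a : ℂ) * γ₂ + (b : ℂ) * γ₁ + γ₁ * γ₂ = 0) :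
    ∀ ζ : ℂ, ‖ζ‖ < 1 →
      (a : ℂ) * ζ * ((γ₁ - ω * ζ) / (1 - ω * (starRingEnd ℂ) γ₁ * ζ)) +
        (b : ℂ) * ζ * ((γ₂ - η * ζ) / (1 - η * (starRingEnd ℂ) γ₂ * ζ)) + ζ =
      (a : ℂ) * ζ ^ 2 * ((γ₂ - η * ζ) / (1 - η * (starRingEnd ℂ) γ₂ * ζ)) +
        (b : ℂ) * ζ ^ 2 * ((γ₁ - ω * ζ) / (1 - ω * (starRingEnd ℂ) γ₁ * ζ)) +
        ζ ^ 2 * ((γ₁ - ω * ζ) * (γ₂ - η * ζ)) /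
          ((1 - ω * (starRingEnd ℂ) γ₁ * ζ) * (1 - η * (starRingEnd ℂ) γ₂ * ζ)) := by
  intro ζ hζ
  have hd₁ := one_sub_mul_conj_mul_ne_zero hω hγ₁ hζ
  have hd₂ := one_sub_mul_conj_mul_ne_zero hη hγ₂ hζ
  have key := mobius_variety_eq_cleared a b γ₁ γ₂ ω η ζ hlin hω hη hcond
  -- abstracting the denominators keeps `field_simp` from renormalising them past `hd₁`, `hd₂`
  generalize 1 - ω * conj γ₁ * ζ = D₁ at hd₁ key ⊢
  generalize 1 - η * conj γ₂ * ζ = D₂ at hd₂ key ⊢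
  field_simp
  linear_combination ζ * key

theorem stmt_8 (a b : ℝ) (γ₁ γ₂ ω η : ℂ) (ha : 0 < a) (hb : 0 < b)
    (hγ₁ : ‖γ₁‖ < 1) (hγ₂ : ‖γ₂‖ < 1)
    (hlin : (a : ℂ) * γ₁ + (b : ℂ) * γ₂ + 1 = 0)
    (hω : ‖ω‖ = 1) (hη : ‖η‖ = 1)
    (hcond : (a : ℂ) * ω * ((1 - ‖γ₁‖ ^ 2 : ℝ) : ℂ) +
      (b : ℂ) * η * ((1 - ‖γ₂‖ ^ 2 : ℝ) : ℂ) +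
      (a : ℂ) * γ₂ + (b : ℂ) * γ₁ + γ₁ * γ₂ = 0) :
    ∀ ζ : ℂ, ‖ζ‖ < 1 →
      (a : ℂ) * ζ * ((γ₁ - ω * ζ) / (1 - ω * (starRingEnd ℂ) γ₁ * ζ)) +
        (b : ℂ) * ζ * ((γ₂ - η * ζ) / (1 - η * (starRingEnd ℂ) γ₂ * ζ)) + ζ =
      (a : ℂ) * ζ ^ 2 * ((γ₂ - η * ζ) / (1 - η * (starRingEnd ℂ) γ₂ * ζ)) +
        (b : ℂ) * ζ ^ 2 * ((γ₁ - ω * ζ) / (1 - ω * (starRingEnd ℂ) γ₁ * ζ)) +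
        ζ ^ 2 * ((γ₁ - ω * ζ) * (γ₂ - η * ζ)) /
          ((1 - ω * (starRingEnd ℂ) γ₁ * ζ) * (1 - η * (starRingEnd ℂ) γ₂ * ζ)) :=
  stmt_8_general a b γ₁ γ₂ ω η hγ₁ hγ₂ hlin hω hη hcond
end

section
/- With Φ = (Φ₁,…,Φ_N) : D → 𝔻^N as above (so that c_D(w,z) = max_j ρ(Φ_j(w),Φ_j(z)) = c_{𝔻^N}(Φ(w),Φ(z)) for all w,z), if additionally D is c-finitely compact (Carathéodory balls are relatively compact in D), then Φ is a proper map from D to 𝔻^N. -/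
/-- The Poincaré (hyperbolic) distance on the unit disc. -/
noncomputable def poinDist (u v : ℂ) : ℝ :=
  (1 / 2) * Real.log ((1 + ‖(u - v) / (1 - (starRingEnd ℂ) u * v)‖) /
    (1 - ‖(u - v) / (1 - (starRingEnd ℂ) u * v)‖))

/-- The Carathéodory pseudodistance of `D ⊆ ℂⁿ`. -/
noncomputable def caraDist (n : ℕ) (D : Set (Fin n → ℂ)) (w z : Fin n → ℂ) : ℝ :=
  sSup {r : ℝ | ∃ F : (Fin n → ℂ) → ℂ, DifferentiableOn ℂ F D ∧
    (∀ x ∈ D, ‖F x‖ < 1) ∧ r = poinDist (F w) (F z)}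

/-!
Fix a point `w` of the preimage `S = D ∩ Φ⁻¹(K)`. The distance `c_{𝔻^N}(Φ(w), ·)` is continuous
on the polydisc, hence bounded on the compact set `K`, say by `R`. Since `Φ` is an isometry from
`c_D` to `c_{𝔻^N}`, `S` lies in the Carathéodory ball of radius `R + 1` about `w`, whose closure is
a compact subset of `D`; `S` is the preimage of the closed set `K` in that closure, so it is compact.
-/

open Set

noncomputable def polydiscDist {ι : Type*} (u v : ι → ℂ) : ℝ :=
  ⨆ j, poinDist (u j) (v j)

lemma normSq_one_sub_conj_mul_sub_normSq_sub (a b : ℂ) :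
    Complex.normSq (1 - (starRingEnd ℂ) a * b) - Complex.normSq (a - b) =
      (1 - Complex.normSq a) * (1 - Complex.normSq b) := by
  simp only [Complex.normSq_apply, Complex.sub_re, Complex.sub_im, Complex.mul_re,
    Complex.mul_im, Complex.conj_re, Complex.conj_im, Complex.one_re, Complex.one_im]
  ring

lemma norm_sub_lt_norm_one_sub_conj_mul {a b : ℂ} (ha : ‖a‖ < 1) (hb : ‖b‖ < 1) :
    ‖a - b‖ < ‖1 - (starRingEnd ℂ) a * b‖ := by
  have ha' : Complex.normSq a < 1 := by
    rw [← Complex.sq_norm]; nlinarith [norm_nonneg a]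
  have hb' : Complex.normSq b < 1 := by
    rw [← Complex.sq_norm]; nlinarith [norm_nonneg b]
  have hsq : Complex.normSq (a - b) < Complex.normSq (1 - (starRingEnd ℂ) a * b) := by
    nlinarith [normSq_one_sub_conj_mul_sub_normSq_sub a b]
  rw [Complex.norm_def, Complex.norm_def]
  exact Real.sqrt_lt_sqrt (Complex.normSq_nonneg _) hsq

lemma continuousAt_poinDist {a b : ℂ} (ha : ‖a‖ < 1) (hb : ‖b‖ < 1) :
    ContinuousAt (poinDist a) b := by
  have hlt := norm_sub_lt_norm_one_sub_conj_mul ha hb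
  have hden : 0 < ‖1 - (starRingEnd ℂ) a * b‖ := (norm_nonneg _).trans_lt hlt
  have ht : ‖(a - b) / (1 - (starRingEnd ℂ) a * b)‖ < 1 := by
    rw [norm_div, div_lt_one hden]
    exact hlt
  have htc : ContinuousAt (fun v => ‖(a - v) / (1 - (starRingEnd ℂ) a * v)‖) b :=
    (continuousAt_const.sub continuousAt_id).div
      (continuousAt_const.sub (continuousAt_const.mul continuousAt_id)) (norm_pos_iff.1 hden)
      |>.norm
  have ht0 := norm_nonneg ((a - b) / (1 - (starRingEnd ℂ) a * b))
  unfold poinDist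
  refine continuousAt_const.mul (ContinuousAt.log ?_ ?_)
  · exact (continuousAt_const.add htc).div (continuousAt_const.sub htc) (by linarith)
  · exact (div_pos (by linarith) (by linarith)).ne'

lemma IsCompact.exists_polydiscDist_le {ι : Type*} [Finite ι] {K : Set (ι → ℂ)}
    (hK : IsCompact K) (hKsub : K ⊆ {u | ∀ j, ‖u j‖ < 1}) {a : ι → ℂ} (ha : ∀ j, ‖a j‖ < 1) :
    ∃ R, ∀ u ∈ K, polydiscDist a u ≤ R := by
  have hbdd (j : ι) : BddAbove ((fun u : ι → ℂ => poinDist (a j) (u j)) '' K) :=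
    hK.bddAbove_image fun u hu =>
      ((continuousAt_poinDist (ha j) (hKsub hu j)).comp (f := fun u : ι → ℂ => u j)
        (continuous_apply j).continuousAt).continuousWithinAt
  choose C hC using hbdd
  obtain ⟨M, hM⟩ := Finite.exists_le C
  refine ⟨max M 0, fun u hu => Real.iSup_le (fun j => ?_) (le_max_right _ _)⟩
  exact (hC j (mem_image_of_mem _ hu)).trans ((hM j).trans (le_max_left _ _))

lemma IsCompact.inter_preimage_of_continuousOn {X Y : Type*} [TopologicalSpace X]
    [TopologicalSpace Y] {f : X → Y} {s : Set X} {t : Set Y} (hs : IsCompact s)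
    (hf : ContinuousOn f s) (ht : IsClosed t) : IsCompact (s ∩ f ⁻¹' t) := by
  obtain ⟨u, hu, hfu⟩ := continuousOn_iff_isClosed.1 hf t ht
  rw [inter_comm, hfu]
  exact hs.inter_left hu

theorem stmt_13_general (n N : ℕ) (D : Set (Fin n → ℂ))
    (Φ : Fin N → (Fin n → ℂ) → ℂ)
    (hΦd : ∀ j, DifferentiableOn ℂ (Φ j) D)
    (huniv : ∀ w ∈ D, ∀ z ∈ D, caraDist n D w z = ⨆ j, poinDist (Φ j w) (Φ j z))
    (hfincpt : ∀ w ∈ D, ∀ r : ℝ, 0 < r →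
      closure {z | z ∈ D ∧ caraDist n D w z < r} ⊆ D ∧
      IsCompact (closure {z | z ∈ D ∧ caraDist n D w z < r})) :
    ∀ K : Set (Fin N → ℂ), IsCompact K → K ⊆ {u | ∀ j, ‖u j‖ < 1} →
      IsCompact {x | x ∈ D ∧ (fun j => Φ j x) ∈ K} := by
  intro K hK hKsub
  obtain hS | ⟨w, hwD, hwK⟩ := {x | x ∈ D ∧ (fun j => Φ j x) ∈ K}.eq_empty_or_nonempty
  · rw [hS]
    exact isCompact_empty
  obtain ⟨R, hR⟩ := hK.exists_polydiscDist_le hKsub (hKsub hwK)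
  obtain ⟨hBD, hB⟩ := hfincpt w hwD (max R 0 + 1) (by positivity)
  have hSB {x} (hx : x ∈ D ∧ (fun j => Φ j x) ∈ K) :
      x ∈ closure {z | z ∈ D ∧ caraDist n D w z < max R 0 + 1} := by
    refine subset_closure ⟨hx.1, ?_⟩
    rw [huniv w hwD x hx.1]
    change polydiscDist (fun j => Φ j w) (fun j => Φ j x) < _
    linarith [hR _ hx.2, le_max_left R 0]
  have hΦB := continuousOn_pi.2 fun j => (hΦd j).continuousOn.mono hBD
  convert hB.inter_preimage_of_continuousOn hΦB hK.isClosed using 1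
  ext x
  exact ⟨fun hx => ⟨hSB hx, hx.2⟩, fun hx => ⟨hBD hx.1, hx.2⟩⟩

theorem stmt_13 (n N : ℕ) (hN : 0 < N) (D : Set (Fin n → ℂ)) (hD : IsOpen D)
    (hconn : IsConnected D)
    (Φ : Fin N → (Fin n → ℂ) → ℂ)
    (hΦd : ∀ j, DifferentiableOn ℂ (Φ j) D)
    (hΦm : ∀ j, ∀ x ∈ D, ‖Φ j x‖ < 1)
    (huniv : ∀ w ∈ D, ∀ z ∈ D, caraDist n D w z = ⨆ j, poinDist (Φ j w) (Φ j z))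
    (hfincpt : ∀ w ∈ D, ∀ r : ℝ, 0 < r →
      closure {z | z ∈ D ∧ caraDist n D w z < r} ⊆ D ∧
      IsCompact (closure {z | z ∈ D ∧ caraDist n D w z < r})) :
    ∀ K : Set (Fin N → ℂ), IsCompact K → K ⊆ {u | ∀ j, ‖u j‖ < 1} →
      IsCompact {x | x ∈ D ∧ (fun j => Φ j x) ∈ K} :=
  stmt_13_general n N D Φ hΦd huniv hfincpt
end

section
/- For t ∈ ℝ, the map f_t(λ) = ((t² + λ)/(1 + t²), t(λ - 1)/(1 + t²)) sends the open unit disc 𝔻 into the open Euclidean unit ball 𝔹₂ ⊂ ℂ². -/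
/-
Expanding the squared moduli, the cross terms `± 2 t² Re ζ` cancel and
`|t² + ζ|² + t² |ζ - 1|² = (1 + t²) (t² + |ζ|²)`, so `‖f_t(ζ)‖² = (t² + |ζ|²) / (1 + t²)`,
which is `< 1` exactly when `|ζ| < 1`.
-/

lemma norm_sq_add_norm_mul_sub_one_sq (t : ℝ) (ζ : ℂ) :
    ‖(t : ℂ) ^ 2 + ζ‖ ^ 2 + ‖(t : ℂ) * (ζ - 1)‖ ^ 2 = (1 + t ^ 2) * (t ^ 2 + ‖ζ‖ ^ 2) := by
  simp only [Complex.sq_norm]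
  simp only [Complex.normSq_apply, Complex.add_re, Complex.add_im,
    Complex.mul_re, Complex.mul_im, Complex.sub_re, Complex.sub_im, Complex.ofReal_re,
    Complex.ofReal_im, Complex.one_re, Complex.one_im, pow_two]
  ring

lemma norm_one_add_sq_ofReal (t : ℝ) : ‖1 + (t : ℂ) ^ 2‖ = 1 + t ^ 2 := by
  rw [← Complex.ofReal_one, ← Complex.ofReal_pow, ← Complex.ofReal_add, Complex.norm_real,
    Real.norm_of_nonneg (by positivity)]

theorem stmt_14 (t : ℝ) (ζ : ℂ) (hζ : ‖ζ‖ < 1) :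
    ‖((t : ℂ) ^ 2 + ζ) / (1 + (t : ℂ) ^ 2)‖ ^ 2 +
      ‖(t : ℂ) * (ζ - 1) / (1 + (t : ℂ) ^ 2)‖ ^ 2 < 1 := by
  have hpos : 0 < 1 + t ^ 2 := by positivity
  have hζsq : ‖ζ‖ ^ 2 < 1 := pow_lt_one₀ (norm_nonneg ζ) hζ two_ne_zero
  rw [norm_div, norm_div, norm_one_add_sq_ofReal, div_pow, div_pow, ← add_div,
    norm_sq_add_norm_mul_sub_one_sq, sq (1 + t ^ 2), mul_div_mul_left _ _ hpos.ne',
    div_lt_one hpos]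
  linarith
end

section
/- The function F(z₁, z₂) = (2 z₁(1 - z₁) - z₂²)/(2(1 - z₁) - z₂²) maps the open unit ball 𝔹₂ ⊂ ℂ² into the open unit disc 𝔻, and satisfies F(z₁, 0) = z₁ for all z₁ ∈ 𝔻. -/
/-!
With `a = 2 (1 - z₁)` and `w = z₂²` the function is `(z₁ a - w) / (a - w)`, and
`‖a - w‖² - ‖z₁ a - w‖² = ‖a‖² (1 - ‖z₁‖²) - Re (a² w̄)`, because `2 (1 - z₁) a = a²`.
Since `Re (a² w̄) ≤ ‖a‖² ‖z₂‖²`, this is at least `‖a‖² (1 - ‖z₁‖² - ‖z₂‖²) > 0` on the ball.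
-/

open ComplexConjugate

namespace Complex

lemma sq_norm_sub_sub_sq_norm_mul_sub (a z w : ℂ) :
    ‖a - w‖ ^ 2 - ‖z * a - w‖ ^ 2 = ‖a‖ ^ 2 * (1 - ‖z‖ ^ 2) - 2 * ((1 - z) * a * conj w).re := by
  simp only [Complex.sq_norm, normSq_apply, mul_re, mul_im, sub_re, sub_im, one_re, one_im, conj_re,
    conj_im]
  ring

lemma norm_mul_sub_lt_norm_sub_of_mem_ball {z₁ z₂ : ℂ} (h : ‖z₁‖ ^ 2 + ‖z₂‖ ^ 2 < 1) :
    ‖2 * z₁ * (1 - z₁) - z₂ ^ 2‖ < ‖2 * (1 - z₁) - z₂ ^ 2‖ := by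
  set a := 2 * (1 - z₁)
  have ha : a ≠ 0 := by
    have hz₁ : ‖z₁‖ < 1 := by nlinarith [norm_nonneg z₁, sq_nonneg ‖z₂‖]
    have h1 : 1 - z₁ ≠ 0 := fun h0 => by simp [← eq_of_sub_eq_zero h0] at hz₁
    exact mul_ne_zero two_ne_zero h1
  have hcross : 2 * ((1 - z₁) * a * conj (z₂ ^ 2)).re ≤ ‖a‖ ^ 2 * ‖z₂‖ ^ 2 := by
    calc 2 * ((1 - z₁) * a * conj (z₂ ^ 2)).re = (a ^ 2 * conj (z₂ ^ 2)).re := by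
          rw [← re_ofReal_mul]; congr 1; push_cast; ring
      _ ≤ ‖a ^ 2 * conj (z₂ ^ 2)‖ := re_le_norm _
      _ = ‖a‖ ^ 2 * ‖z₂‖ ^ 2 := by simp [norm_pow]
  have hsq : ‖2 * z₁ * (1 - z₁) - z₂ ^ 2‖ ^ 2 < ‖2 * (1 - z₁) - z₂ ^ 2‖ ^ 2 := by
    have hid := sq_norm_sub_sub_sq_norm_mul_sub a z₁ (z₂ ^ 2)
    rw [show z₁ * a = 2 * z₁ * (1 - z₁) by ring] at hid
    have ha2 : 0 < ‖a‖ ^ 2 := by positivity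
    nlinarith
  exact (pow_lt_pow_iff_left₀ (norm_nonneg _) (norm_nonneg _) two_ne_zero).mp hsq

end Complex

theorem stmt_16 :
    (∀ z₁ z₂ : ℂ, ‖z₁‖ ^ 2 + ‖z₂‖ ^ 2 < 1 →
      2 * (1 - z₁) - z₂ ^ 2 ≠ 0 ∧
      ‖(2 * z₁ * (1 - z₁) - z₂ ^ 2) / (2 * (1 - z₁) - z₂ ^ 2)‖ < 1) ∧
    (∀ z₁ : ℂ, ‖z₁‖ < 1 →
      (2 * z₁ * (1 - z₁) - (0 : ℂ) ^ 2) / (2 * (1 - z₁) - (0 : ℂ) ^ 2) = z₁) := by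
  refine ⟨fun z₁ z₂ h => ?_, fun z₁ h => ?_⟩
  · have hlt := Complex.norm_mul_sub_lt_norm_sub_of_mem_ball h
    have hden : 0 < ‖2 * (1 - z₁) - z₂ ^ 2‖ := (norm_nonneg _).trans_lt hlt
    exact ⟨norm_pos_iff.mp hden, by rwa [norm_div, div_lt_one hden]⟩
  · have h1 : 1 - z₁ ≠ 0 := fun h0 => by simp [← eq_of_sub_eq_zero h0] at h
    field_simp
    ring
end

section
/- For z ∈ ∂𝔹₂ (|z₁|² + |z₂|² = 1) with 2(1 - z₁) - z₂² ≠ 0, the function F(z₁, z₂) = (2z₁(1-z₁) - z₂²)/(2(1-z₁) - z₂²) satisfies |F(z)| = 1 if and only if Im(z₂(1 - conj(z₁))) = 0. -/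
/-!
Put `w = 1 - z₁` and `u = z₂ * conj w`. The numerator is `D - 2 w²`, where `D` is the
denominator, and on the sphere `‖z₂‖² = 2 Re w - ‖w‖²`; expanding with these two facts gives
`‖D‖² - ‖D - 2 w²‖² = 4 (‖u‖² - Re (u²)) = 8 (Im u)²`.
-/

open Complex ComplexConjugate

theorem normSq_sub_normSq_eq_of_normSq_add_normSq_eq_one {z₁ z₂ : ℂ}
    (h : normSq z₁ + normSq z₂ = 1) :
    normSq (2 * (1 - z₁) - z₂ ^ 2) - normSq (2 * z₁ * (1 - z₁) - z₂ ^ 2)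
      = 8 * (z₂ * (1 - conj z₁)).im ^ 2 := by
  simp only [normSq_apply, sq, sub_re, sub_im, mul_re, mul_im, one_re, one_im, conj_re,
    conj_im, re_ofNat, im_ofNat] at h ⊢
  linear_combination (-4 * z₁.re ^ 2 + 8 * z₁.re - 4 * z₁.im ^ 2 - 4) * h

theorem norm_div_eq_one_iff_normSq_eq {a b : ℂ} (hb : b ≠ 0) :
    ‖a / b‖ = 1 ↔ normSq a = normSq b := by
  rw [norm_div, div_eq_one_iff_eq (norm_ne_zero_iff.mpr hb), ← sq_eq_sq₀ (norm_nonneg a)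
    (norm_nonneg b), Complex.sq_norm, Complex.sq_norm]

theorem stmt_17 (z₁ z₂ : ℂ)
    (hsphere : ‖z₁‖ ^ 2 + ‖z₂‖ ^ 2 = 1)
    (hden : 2 * (1 - z₁) - z₂ ^ 2 ≠ 0) :
    ‖(2 * z₁ * (1 - z₁) - z₂ ^ 2) / (2 * (1 - z₁) - z₂ ^ 2)‖ = 1 ↔
      (z₂ * (1 - (starRingEnd ℂ) z₁)).im = 0 := by
  rw [Complex.sq_norm, Complex.sq_norm] at hsphere
  have key := normSq_sub_normSq_eq_of_normSq_add_normSq_eq_one hsphere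
  rw [norm_div_eq_one_iff_normSq_eq hden, eq_comm, ← sub_eq_zero, key]
  simp
end
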